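/- Let f be an entire function, x ∈ ℝ, and suppose there exist A, σ > 0 such that |f^{(n)}(x)| ≤ A·σ^n for all n ≥ 1. Let α > Aσ and set g(z) = αz + f(z). Then for every R > 0 and every z ∈ ℂ with |z − x| = R, |g(z) − g(x)| ≥ αR − A(e^{σR} − 1). In particular, for the choice R = (1/σ)·log(α/(Aσ)) > 0, one has |g(z) − g(x)| ≥ (α/σ)·log(α/(Aσ)) − (α − Aσ)/σ for all z with |z − x| = R. -/

import Mathlib

/-!
Expanding `f` in its Taylor series at `x` and bounding the `n`-th term by `A (σR)^n / n!` gives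
`|f z − f x| ≤ A (e^{σR} − 1)` on the circle `|z − x| = R`; the reverse triangle inequality
against the linear part `α (z − x)` of `g z − g x` then gives `|g z − g x| ≥ αR − A (e^{σR} − 1)`. At `R = (1/σ) log (α/(Aσ))` we have
`e^{σR} = α/(Aσ)`, which turns this bound into the closed form.
-/

open scoped Nat

open Real

theorem Real.hasSum_exp_sub_one (x : ℝ) :
    HasSum (fun n : ℕ => x ^ (n + 1) / (n + 1)!) (exp x - 1) := by
  have hexp : HasSum (fun n : ℕ => x ^ n / n !) (exp x) := by
    rw [Real.exp_eq_exp_ℝ]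
    exact NormedSpace.expSeries_div_hasSum_exp x
  simpa using (hasSum_nat_add_iff' 1).2 hexp

theorem Differentiable.norm_sub_le_of_norm_iteratedDeriv_le {E : Type*} [NormedAddCommGroup E]
    [NormedSpace ℂ E] [CompleteSpace E] {f : ℂ → E} (hf : Differentiable ℂ f) {c : ℂ} {A σ : ℝ}
    (hderiv : ∀ n : ℕ, 1 ≤ n → ‖iteratedDeriv n f c‖ ≤ A * σ ^ n) (z : ℂ) :
    ‖f z - f c‖ ≤ A * (Real.exp (σ * ‖z - c‖) - 1) := by
  set term : ℕ → E := fun n => (n ! : ℂ)⁻¹ • (z - c) ^ n • iteratedDeriv n f c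
  have htaylor : HasSum (fun n => term (n + 1)) (f z - f c) := by
    simpa [term] using (hasSum_nat_add_iff' 1).2 (Complex.hasSum_taylorSeries_of_entire hf c z)
  have hterm : ∀ n : ℕ, ‖term (n + 1)‖ ≤ A * ((σ * ‖z - c‖) ^ (n + 1) / (n + 1)!) := fun n =>
    calc ‖term (n + 1)‖
        = ((n + 1)! : ℝ)⁻¹ * (‖z - c‖ ^ (n + 1) * ‖iteratedDeriv (n + 1) f c‖) := by
          simp [term, norm_smul]
      _ ≤ ((n + 1)! : ℝ)⁻¹ * (‖z - c‖ ^ (n + 1) * (A * σ ^ (n + 1))) := by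
          gcongr; exact hderiv (n + 1) n.succ_pos
      _ = A * ((σ * ‖z - c‖) ^ (n + 1) / (n + 1)!) := by ring
  rw [← htaylor.tsum_eq]
  exact tsum_of_norm_bounded ((Real.hasSum_exp_sub_one _).mul_left A) hterm

theorem mul_norm_sub_sub_le_norm_mul_add_sub (α : ℝ) (f : ℂ → ℂ) (z c : ℂ) :
    α * ‖z - c‖ - ‖f z - f c‖ ≤ ‖((α : ℂ) * z + f z) - ((α : ℂ) * c + f c)‖ := by
  have hlin : α * ‖z - c‖ ≤ ‖(α : ℂ) * (z - c)‖ := by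
    rw [norm_mul, Complex.norm_real, Real.norm_eq_abs]
    gcongr
    exact le_abs_self α
  calc α * ‖z - c‖ - ‖f z - f c‖
      ≤ ‖(α : ℂ) * (z - c)‖ - ‖f z - f c‖ := by gcongr
    _ ≤ ‖(α : ℂ) * (z - c) + (f z - f c)‖ := norm_sub_le_norm_add _ _
    _ = ‖((α : ℂ) * z + f z) - ((α : ℂ) * c + f c)‖ := by ring_nf

section Optimum

variable {A σ α : ℝ}

theorem one_div_mul_log_div_pos (hA : 0 < A) (hσ : 0 < σ) (hα : A * σ < α) :
    0 < (1 / σ) * log (α / (A * σ)) := by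
  have := log_pos ((one_lt_div (by positivity)).2 hα)
  positivity

theorem mul_sub_mul_exp_sub_one_at_log (hA : 0 < A) (hσ : 0 < σ) (hα : 0 < α) :
    α * ((1 / σ) * log (α / (A * σ))) - A * (exp (σ * ((1 / σ) * log (α / (A * σ)))) - 1)
      = (α / σ) * log (α / (A * σ)) - (α - A * σ) / σ := by
  have hσR : σ * ((1 / σ) * log (α / (A * σ))) = log (α / (A * σ)) := by field_simp
  rw [hσR, exp_log (by positivity)]
  field_simp

end Optimum

/-- Lower bound on the circle: `|g(z) − g(x)| ≥ αR − A(e^{σR} − 1)` for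
`|z − x| = R`, and for the maximizing choice `R = (1/σ) log(α/(Aσ))` the bound
becomes `(α/σ) log(α/(Aσ)) − (α − Aσ)/σ`. -/
theorem g_lower_bound_on_circle
    (f : ℂ → ℂ) (hf : Differentiable ℂ f) (x : ℝ) (A σ α : ℝ)
    (hA : 0 < A) (hσ : 0 < σ)
    (hderiv : ∀ n : ℕ, 1 ≤ n → ‖iteratedDeriv n f (x : ℂ)‖ ≤ A * σ ^ n)
    (hα : A * σ < α) :
    (∀ R : ℝ, 0 < R → ∀ z : ℂ, ‖z - (x : ℂ)‖ = R →
        α * R - A * (Real.exp (σ * R) - 1)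
          ≤ ‖((α : ℂ) * z + f z) - ((α : ℂ) * (x : ℂ) + f (x : ℂ))‖) ∧
    (0 < (1 / σ) * Real.log (α / (A * σ)) ∧
      ∀ z : ℂ, ‖z - (x : ℂ)‖ = (1 / σ) * Real.log (α / (A * σ)) →
        (α / σ) * Real.log (α / (A * σ)) - (α - A * σ) / σ
          ≤ ‖((α : ℂ) * z + f z) - ((α : ℂ) * (x : ℂ) + f (x : ℂ))‖) := by
  have circle : ∀ R : ℝ, 0 < R → ∀ z : ℂ, ‖z - (x : ℂ)‖ = R →
      α * R - A * (Real.exp (σ * R) - 1)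
        ≤ ‖((α : ℂ) * z + f z) - ((α : ℂ) * (x : ℂ) + f (x : ℂ))‖ := by
    rintro R - z rfl
    have htaylor := hf.norm_sub_le_of_norm_iteratedDeriv_le hderiv z
    linarith [mul_norm_sub_sub_le_norm_mul_add_sub α f z x]
  refine ⟨circle, one_div_mul_log_div_pos hA hσ hα, fun z hz => ?_⟩
  have hαpos : 0 < α := lt_trans (by positivity) hα
  rw [← mul_sub_mul_exp_sub_one_at_log hA hσ hαpos]
  exact circle _ (one_div_mul_log_div_pos hA hσ hα) z hz
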